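/- Let t ∈ ℝ be fixed and suppose θ_j < 0 < θ_{j'} are real numbers satisfying θ_j = λ - (1 - Φ(t - θ_j))/φ(t - θ_j) and θ_{j'} = λ - (1 - Φ(t - θ_{j'}))/φ(t - θ_{j'}) for a common λ ∈ ℝ. Then a contradiction arises; i.e., no such configuration exists. -/
import Mathlib

open MeasureTheory Real Set


/-- Standard normal density. -/
noncomputable def stdGaussianPDF (z : ℝ) : ℝ :=
  (Real.sqrt (2 * Real.pi))⁻¹ * Real.exp (-(z ^ 2) / 2)

/-- Standard normal CDF. -/
noncomputable def stdGaussianCDF (z : ℝ) : ℝ :=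
  ∫ t in Set.Iic z, stdGaussianPDF t

lemma pdf_pos (z : ℝ) : 0 < stdGaussianPDF z := by
  unfold stdGaussianPDF; positivity

lemma pdf_eq : stdGaussianPDF = fun z => (Real.sqrt (2 * Real.pi))⁻¹ * Real.exp (-(1/2) * z ^ 2) := by
  funext z; unfold stdGaussianPDF; ring_nf

lemma pdf_integrable : Integrable stdGaussianPDF := by
  rw [pdf_eq]
  exact (integrable_exp_neg_mul_sq (by norm_num : (0:ℝ) < 1/2)).const_mul _

lemma pdf_total : ∫ x, stdGaussianPDF x = 1 := by
  rw [pdf_eq]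
  rw [integral_const_mul, integral_gaussian]
  have : π / (1/2) = 2 * π := by ring
  rw [this, inv_mul_cancel₀]
  positivity

lemma tail_eq (z : ℝ) : 1 - stdGaussianCDF z = ∫ u in Set.Ioi z, stdGaussianPDF u := by
  have h := intervalIntegral.integral_Iic_add_Ioi (b := z) (μ := volume)
    pdf_integrable.integrableOn pdf_integrable.integrableOn
  rw [pdf_total] at h
  unfold stdGaussianCDF
  linarith

lemma shift_Ioi (f : ℝ → ℝ) (z d : ℝ) :
    ∫ u in Set.Ioi z, f u = ∫ u in Set.Ioi (z - d), f (u + d) := by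
  rw [← integral_indicator measurableSet_Ioi, ← integral_indicator measurableSet_Ioi,
    ← integral_add_right_eq_self (fun x => (Set.Ioi z).indicator f x) d]
  congr 1
  ext x
  by_cases h : z - d < x
  · rw [Set.indicator_of_mem (by simp; linarith), Set.indicator_of_mem (by simpa using h)]
  · push_neg at h
    rw [Set.indicator_of_notMem (by simp; linarith), Set.indicator_of_notMem (by simpa using h)]

lemma cross_ineq {z1 z2 : ℝ} (h : z1 ≤ z2) :
    (1 - stdGaussianCDF z2) * stdGaussianPDF z1 ≤ (1 - stdGaussianCDF z1) * stdGaussianPDF z2 := by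
  rw [tail_eq, tail_eq, ← integral_mul_const, ← integral_mul_const]
  set d := z2 - z1 with hd
  have h2 : ∫ u in Set.Ioi z2, stdGaussianPDF u * stdGaussianPDF z1
      = ∫ u in Set.Ioi z1, stdGaussianPDF (u + d) * stdGaussianPDF z1 := by
    have := shift_Ioi (fun u => stdGaussianPDF u * stdGaussianPDF z1) z2 d
    simpa [hd] using this
  rw [h2]
  apply setIntegral_mono_on
  · have : Integrable (fun u => stdGaussianPDF (u + d) * stdGaussianPDF z1) := by
      exact (pdf_integrable.comp_add_right d).mul_const _
    exact this.integrableOn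
  · exact (pdf_integrable.mul_const _).integrableOn
  · exact measurableSet_Ioi
  · intro u hu
    simp only [Set.mem_Ioi] at hu
    unfold stdGaussianPDF
    have hd0 : 0 ≤ d := by linarith
    have hexp : Real.exp (-(u + d) ^ 2 / 2) * Real.exp (-z1 ^ 2 / 2)
        ≤ Real.exp (-u ^ 2 / 2) * Real.exp (-z2 ^ 2 / 2) := by
      rw [← Real.exp_add, ← Real.exp_add]
      apply Real.exp_le_exp.mpr
      have hz2 : z2 = z1 + d := by simp [hd]
      nlinarith [mul_le_mul_of_nonneg_left hu.le hd0]
    have hc : (0:ℝ) ≤ (Real.sqrt (2 * Real.pi))⁻¹ * (Real.sqrt (2 * Real.pi))⁻¹ := by positivity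
    nlinarith [mul_le_mul_of_nonneg_left hexp hc]

/-- No configuration with a strictly negative and a strictly positive coefficient can
satisfy the first-order conditions with a common Lagrange multiplier `λ`. -/
theorem no_mixed_sign_FOC (t lam θj θj' : ℝ)
    (hneg : θj < 0) (hpos : 0 < θj')
    (h1 : θj = lam - (1 - stdGaussianCDF (t - θj)) / stdGaussianPDF (t - θj))
    (h2 : θj' = lam - (1 - stdGaussianCDF (t - θj')) / stdGaussianPDF (t - θj')) :
    False := by
  set z1 := t - θj' with hz1
  set z2 := t - θj with hz2
  have hz : z1 ≤ z2 := by simp [hz1, hz2]; linarith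
  have key := cross_ineq hz
  have p1 := pdf_pos z1
  have p2 := pdf_pos z2
  -- M(z2) = lam - θj, M(z1) = lam - θj'
  have e2 : (1 - stdGaussianCDF z2) / stdGaussianPDF z2 = lam - θj := by linarith
  have e1 : (1 - stdGaussianCDF z1) / stdGaussianPDF z1 = lam - θj' := by linarith
  have q2 : (1 - stdGaussianCDF z2) = (lam - θj) * stdGaussianPDF z2 := by
    field_simp at e2; linarith
  have q1 : (1 - stdGaussianCDF z1) = (lam - θj') * stdGaussianPDF z1 := by
    field_simp at e1; linarith
  rw [q1, q2] at key
  nlinarith [mul_pos p1 p2]
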